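/- arXiv:2010.10473 — 3 statements merged into one kernel-verified Lean document; each statement's English description precedes it below -/
import Mathlib

section
/- Reduction of regret-suboptimality to H∞-suboptimality: a controller u = Kw satisfies cost(w, Kw) - min_u cost(w,u) < γ²‖w‖² for all nonzero w if and only if, with the change of variables z = Δw (where ΔᵀΔ = γ²I + Gᵀ(I+FFᵀ)⁻¹G and Δ is invertible), the controller K' = KΔ⁻¹ satisfies ‖F K'z + GΔ⁻¹ z‖² + ‖K'z‖² < ‖z‖² for all nonzero z. -/
open Matrix

noncomputable section

def cost {N M P : ℕ} (F : Matrix (Fin N) (Fin M) ℝ) (G : Matrix (Fin N) (Fin P) ℝ)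
    (w : Fin P → ℝ) (u : Fin M → ℝ) : ℝ :=
  (F *ᵥ u + G *ᵥ w) ⬝ᵥ (F *ᵥ u + G *ᵥ w) + u ⬝ᵥ u

lemma key_quad {N M P : ℕ} (F : Matrix (Fin N) (Fin M) ℝ) (G : Matrix (Fin N) (Fin P) ℝ)
    (γ : ℝ) (Δ : Matrix (Fin P) (Fin P) ℝ)
    (hfac : Δᵀ * Δ = γ ^ 2 • (1 : Matrix (Fin P) (Fin P) ℝ) + Gᵀ * (1 + F * Fᵀ)⁻¹ * G)
    (w : Fin P → ℝ) :
    (Δ *ᵥ w) ⬝ᵥ (Δ *ᵥ w) = γ ^ 2 * (w ⬝ᵥ w) + w ⬝ᵥ ((Gᵀ * (1 + F * Fᵀ)⁻¹ * G) *ᵥ w) := by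
  have h1 : (Δ *ᵥ w) ⬝ᵥ (Δ *ᵥ w) = w ⬝ᵥ ((Δᵀ * Δ) *ᵥ w) := by
    rw [← mulVec_mulVec, dotProduct_mulVec w, vecMul_transpose, dotProduct_comm]
  rw [h1, hfac, add_mulVec, dotProduct_add, smul_mulVec, one_mulVec,
    dotProduct_smul, smul_eq_mul]

/-- Reduction of regret-suboptimality to H∞-suboptimality at level 1 after the
change of variables z = Δw, where ΔᵀΔ = γ²I + Gᵀ(I+FFᵀ)⁻¹G and Δ invertible. -/
theorem stmt_6 {N M P : ℕ} (F : Matrix (Fin N) (Fin M) ℝ) (G : Matrix (Fin N) (Fin P) ℝ)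
    (K : Matrix (Fin M) (Fin P) ℝ) (γ : ℝ) (hγ : 0 < γ)
    (Δ : Matrix (Fin P) (Fin P) ℝ) (hΔ : IsUnit Δ)
    (hfac : Δᵀ * Δ = γ ^ 2 • (1 : Matrix (Fin P) (Fin P) ℝ) + Gᵀ * (1 + F * Fᵀ)⁻¹ * G) :
    (∀ w : Fin P → ℝ, w ≠ 0 →
        cost F G w (K *ᵥ w) - w ⬝ᵥ ((Gᵀ * (1 + F * Fᵀ)⁻¹ * G) *ᵥ w)
          < γ ^ 2 * (w ⬝ᵥ w)) ↔
      (∀ z : Fin P → ℝ, z ≠ 0 →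
        (F *ᵥ ((K * Δ⁻¹) *ᵥ z) + (G * Δ⁻¹) *ᵥ z) ⬝ᵥ
            (F *ᵥ ((K * Δ⁻¹) *ᵥ z) + (G * Δ⁻¹) *ᵥ z)
          + ((K * Δ⁻¹) *ᵥ z) ⬝ᵥ ((K * Δ⁻¹) *ᵥ z) < z ⬝ᵥ z) := by
  have hdet : IsUnit Δ.det := (isUnit_iff_isUnit_det Δ).mp hΔ
  have hinv : Δ * Δ⁻¹ = 1 := mul_nonsing_inv Δ hdet
  have hinv' : Δ⁻¹ * Δ = 1 := nonsing_inv_mul Δ hdet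
  constructor
  · intro h z hz
    set w := Δ⁻¹ *ᵥ z with hw
    have hzw : Δ *ᵥ w = z := by
      rw [hw, mulVec_mulVec, hinv, one_mulVec]
    have hwne : w ≠ 0 := by
      intro h0
      apply hz
      rw [← hzw, h0, mulVec_zero]
    have := h w hwne
    rw [cost] at this
    have e1 : (K * Δ⁻¹) *ᵥ z = K *ᵥ w := by rw [hw, mulVec_mulVec]
    have e2 : (G * Δ⁻¹) *ᵥ z = G *ᵥ w := by rw [hw, mulVec_mulVec]
    have e3 : z ⬝ᵥ z = γ ^ 2 * (w ⬝ᵥ w) + w ⬝ᵥ ((Gᵀ * (1 + F * Fᵀ)⁻¹ * G) *ᵥ w) := by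
      rw [← hzw]; exact key_quad F G γ Δ hfac w
    rw [e1, e2, e3]
    linarith
  · intro h w hw
    set z := Δ *ᵥ w with hz
    have hwz : Δ⁻¹ *ᵥ z = w := by
      rw [hz, mulVec_mulVec, hinv', one_mulVec]
    have hzne : z ≠ 0 := by
      intro h0
      apply hw
      rw [← hwz, h0, mulVec_zero]
    have := h z hzne
    have e1 : (K * Δ⁻¹) *ᵥ z = K *ᵥ w := by rw [← mulVec_mulVec, hwz]
    have e2 : (G * Δ⁻¹) *ᵥ z = G *ᵥ w := by rw [← mulVec_mulVec, hwz]
    have e3 : z ⬝ᵥ z = γ ^ 2 * (w ⬝ᵥ w) + w ⬝ᵥ ((Gᵀ * (1 + F * Fᵀ)⁻¹ * G) *ᵥ w) :=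
      key_quad F G γ Δ hfac w
    rw [e1, e2, e3] at this
    rw [cost]
    linarith
end
end

section
/- For a controller u = Kw, the regret cost(w,Kw) - min_u cost(w,u) equals wᵀ[(FK+G)ᵀ(FK+G) + KᵀK - Gᵀ(I+FFᵀ)⁻¹G]w, and this quadratic form is positive semidefinite (regret is always nonnegative). -/
open Matrix

noncomputable section

lemma sq_dot {k P : ℕ} (C : Matrix (Fin k) (Fin P) ℝ) (w : Fin P → ℝ) :
    (C *ᵥ w) ⬝ᵥ (C *ᵥ w) = w ⬝ᵥ ((Cᵀ * C) *ᵥ w) := by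
  rw [← Matrix.mulVec_mulVec, Matrix.dotProduct_mulVec w Cᵀ, Matrix.vecMul_transpose]

/-- The regret of the controller u = Kw equals the quadratic form
wᵀ[(FK+G)ᵀ(FK+G) + KᵀK - Gᵀ(I+FFᵀ)⁻¹G]w, and this matrix is positive semidefinite. -/
theorem stmt_7 {N M P : ℕ} (F : Matrix (Fin N) (Fin M) ℝ) (G : Matrix (Fin N) (Fin P) ℝ)
    (K : Matrix (Fin M) (Fin P) ℝ) :
    (∀ w : Fin P → ℝ,
        cost F G w (K *ᵥ w) - w ⬝ᵥ ((Gᵀ * (1 + F * Fᵀ)⁻¹ * G) *ᵥ w)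
          = w ⬝ᵥ (((F * K + G)ᵀ * (F * K + G) + Kᵀ * K - Gᵀ * (1 + F * Fᵀ)⁻¹ * G) *ᵥ w)) ∧
      ((F * K + G)ᵀ * (F * K + G) + Kᵀ * K - Gᵀ * (1 + F * Fᵀ)⁻¹ * G).PosSemidef := by
  constructor
  · intro w
    have h1 : cost F G w (K *ᵥ w)
        = w ⬝ᵥ (((F * K + G)ᵀ * (F * K + G)) *ᵥ w) + w ⬝ᵥ ((Kᵀ * K) *ᵥ w) := by
      unfold cost
      rw [Matrix.mulVec_mulVec, ← Matrix.add_mulVec, sq_dot, sq_dot]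
    rw [Matrix.sub_mulVec, Matrix.add_mulVec, dotProduct_sub, dotProduct_add, h1]
  · -- positive semidefiniteness
    set A : Matrix (Fin M) (Fin M) ℝ := 1 + Fᵀ * F with hA_def
    have hFps : (Fᵀ * F).PosSemidef := by
      have := Matrix.posSemidef_conjTranspose_mul_self F
      rwa [Matrix.conjTranspose_eq_transpose_of_trivial] at this
    have hA : A.PosDef := Matrix.PosDef.one.add_posSemidef hFps
    have hdet : IsUnit A.det := (Matrix.isUnit_iff_isUnit_det A).mp hA.isUnit
    have hAinv : A * A⁻¹ = 1 := Matrix.mul_nonsing_inv A hdet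
    have hAinv' : A⁻¹ * A = 1 := Matrix.nonsing_inv_mul A hdet
    have hAinvT : (A⁻¹)ᵀ = A⁻¹ := by
      have := hA.isHermitian.inv
      rwa [Matrix.IsHermitian, Matrix.conjTranspose_eq_transpose_of_trivial] at this
    have c1 : ∀ {q : ℕ} (X : Matrix (Fin M) (Fin q) ℝ), A * (A⁻¹ * X) = X := fun X => by
      rw [← Matrix.mul_assoc, hAinv, Matrix.one_mul]
    have c2 : ∀ {q : ℕ} (X : Matrix (Fin M) (Fin q) ℝ), A⁻¹ * (A * X) = X := fun X => by
      rw [← Matrix.mul_assoc, hAinv', Matrix.one_mul]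
    -- key inverse identity
    have h2 : F * (A⁻¹ * Fᵀ) + F * (Fᵀ * (F * (A⁻¹ * Fᵀ))) = F * Fᵀ := by
      calc F * (A⁻¹ * Fᵀ) + F * (Fᵀ * (F * (A⁻¹ * Fᵀ)))
          = F * ((1 + Fᵀ * F) * (A⁻¹ * Fᵀ)) := by
            simp only [Matrix.mul_add, Matrix.add_mul, Matrix.one_mul, Matrix.mul_assoc]
        _ = F * (A * (A⁻¹ * Fᵀ)) := by rw [← hA_def]
        _ = F * Fᵀ := by rw [c1]
    have key : (1 + F * Fᵀ) * (1 - F * A⁻¹ * Fᵀ) = 1 := by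
      calc (1 + F * Fᵀ) * (1 - F * A⁻¹ * Fᵀ)
          = 1 + F * Fᵀ - (F * (A⁻¹ * Fᵀ) + F * (Fᵀ * (F * (A⁻¹ * Fᵀ)))) := by
            simp only [Matrix.mul_sub, Matrix.sub_mul, Matrix.add_mul, Matrix.mul_add,
              Matrix.mul_one, Matrix.one_mul, Matrix.mul_assoc]
        _ = 1 + F * Fᵀ - F * Fᵀ := by rw [h2]
        _ = 1 := by abel
    have hinv : (1 + F * Fᵀ)⁻¹ = 1 - F * A⁻¹ * Fᵀ := Matrix.inv_eq_right_inv key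
    -- factorization
    set B : Matrix (Fin M) (Fin P) ℝ := K + A⁻¹ * (Fᵀ * G) with hB_def
    have hBT : Bᵀ = Kᵀ + Gᵀ * F * A⁻¹ := by
      rw [hB_def, Matrix.transpose_add, Matrix.transpose_mul, Matrix.transpose_mul, hAinvT,
        Matrix.transpose_transpose, Matrix.mul_assoc]
    have rhs : Bᵀ * A * B
        = Kᵀ * (A * K) + Kᵀ * (Fᵀ * G) + Gᵀ * (F * K) + Gᵀ * (F * (A⁻¹ * (Fᵀ * G))) := by
      rw [hBT, hB_def]
      simp only [Matrix.add_mul, Matrix.mul_add, Matrix.mul_assoc, c1, c2]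
      abel
    have rhs2 : Kᵀ * (A * K) = Kᵀ * K + Kᵀ * (Fᵀ * (F * K)) := by
      rw [hA_def]
      simp only [Matrix.add_mul, Matrix.mul_add, Matrix.one_mul, Matrix.mul_assoc]
    have lhs : (F * K + G)ᵀ * (F * K + G) + Kᵀ * K - Gᵀ * (1 + F * Fᵀ)⁻¹ * G
        = Kᵀ * (Fᵀ * (F * K)) + Kᵀ * (Fᵀ * G) + Gᵀ * (F * K) + Gᵀ * G + Kᵀ * K
          - (Gᵀ * G - Gᵀ * (F * (A⁻¹ * (Fᵀ * G)))) := by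
      rw [hinv]
      simp only [Matrix.transpose_add, Matrix.transpose_mul, Matrix.mul_sub, Matrix.sub_mul,
        Matrix.add_mul, Matrix.mul_add, Matrix.mul_one, Matrix.one_mul, Matrix.mul_assoc]
      abel
    have hM : (F * K + G)ᵀ * (F * K + G) + Kᵀ * K - Gᵀ * (1 + F * Fᵀ)⁻¹ * G = Bᵀ * A * B := by
      rw [lhs, rhs, rhs2]
      abel
    rw [hM]
    have := hA.posSemidef.conjTranspose_mul_mul_same B
    rwa [Matrix.conjTranspose_eq_transpose_of_trivial] at this
end
end

section
/- If a lower triangular matrix K satisfies ‖FKz + G'z‖² + ‖Kz‖² < ‖z‖² for all nonzero z (H∞ performance level 1), then setting w = Δ⁻¹z, the controller K·Δ (mapping w to u) achieves regret cost(w,u) - min_u cost(w,u) < γ²‖w‖² for all nonzero w, where G' = GΔ⁻¹ and ΔᵀΔ = γ²I + Gᵀ(I+FFᵀ)⁻¹G. -/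
open Matrix

noncomputable section

/-- If a causal (lower triangular) K achieves H∞ performance level 1 for the
system (F, G') with G' = GΔ⁻¹, then the controller KΔ achieves regret less than
γ²‖w‖² for every nonzero w, where ΔᵀΔ = γ²I + Gᵀ(I+FFᵀ)⁻¹G. -/
theorem stmt_17 {N M P : ℕ} (F : Matrix (Fin N) (Fin M) ℝ) (G : Matrix (Fin N) (Fin P) ℝ)
    (K : Matrix (Fin M) (Fin P) ℝ) (γ : ℝ) (hγ : 0 < γ)
    (hF : ∀ (i : Fin N) (j : Fin M), (i : ℕ) ≤ (j : ℕ) → F i j = 0)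
    (hK : ∀ (i : Fin M) (j : Fin P), (i : ℕ) < (j : ℕ) → K i j = 0)
    (Δ : Matrix (Fin P) (Fin P) ℝ)
    (hΔlow : ∀ i j : Fin P, i < j → Δ i j = 0)
    (hΔdiag : ∀ i : Fin P, 0 < Δ i i)
    (hfac : Δᵀ * Δ = γ ^ 2 • (1 : Matrix (Fin P) (Fin P) ℝ) + Gᵀ * (1 + F * Fᵀ)⁻¹ * G)
    (hHinf : ∀ z : Fin P → ℝ, z ≠ 0 →
      (F *ᵥ (K *ᵥ z) + (G * Δ⁻¹) *ᵥ z) ⬝ᵥ (F *ᵥ (K *ᵥ z) + (G * Δ⁻¹) *ᵥ z)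
        + (K *ᵥ z) ⬝ᵥ (K *ᵥ z) < z ⬝ᵥ z) :
    ∀ w : Fin P → ℝ, w ≠ 0 →
      cost F G w ((K * Δ) *ᵥ w) - w ⬝ᵥ ((Gᵀ * (1 + F * Fᵀ)⁻¹ * G) *ᵥ w)
        < γ ^ 2 * (w ⬝ᵥ w) := by
  intro w hw
  -- Δ is invertible
  have hdet : Δ.det ≠ 0 := by
    have : Δᵀ.det = ∏ i, Δᵀ i i := by
      apply Matrix.det_of_upperTriangular
      intro i j hij
      exact hΔlow j i hij
    have hdt : Δ.det = ∏ i, Δ i i := by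
      rw [← Matrix.det_transpose, this]; rfl
    rw [hdt]
    exact ne_of_gt (Finset.prod_pos (fun i _ => hΔdiag i))
  have hunit : IsUnit Δ.det := isUnit_iff_ne_zero.mpr hdet
  have hinv : Δ⁻¹ * Δ = 1 := Matrix.nonsing_inv_mul Δ hunit
  set z := Δ *ᵥ w with hz
  have hzne : z ≠ 0 := by
    intro h
    apply hw
    have : Δ⁻¹ *ᵥ (Δ *ᵥ w) = Δ⁻¹ *ᵥ 0 := by rw [← hz, h]
    rwa [Matrix.mulVec_mulVec, hinv, Matrix.one_mulVec, Matrix.mulVec_zero] at this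
  have h1 : (G * Δ⁻¹) *ᵥ z = G *ᵥ w := by
    rw [hz, Matrix.mulVec_mulVec, Matrix.mul_assoc, hinv, Matrix.mul_one]
  have h2 : K *ᵥ z = (K * Δ) *ᵥ w := by rw [hz, Matrix.mulVec_mulVec]
  have hzz : z ⬝ᵥ z = γ ^ 2 * (w ⬝ᵥ w) + w ⬝ᵥ ((Gᵀ * (1 + F * Fᵀ)⁻¹ * G) *ᵥ w) := by
    rw [hz, Matrix.dotProduct_mulVec, ← Matrix.mulVec_transpose, Matrix.mulVec_mulVec, hfac,
      Matrix.add_mulVec, add_dotProduct, Matrix.smul_mulVec, Matrix.one_mulVec,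
      smul_dotProduct, smul_eq_mul]
    congr 1
    exact dotProduct_comm _ w
  have := hHinf z hzne
  rw [h1, h2, hzz] at this
  unfold cost
  linarith
end
end
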